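/- Let K be a field, λ ∈ K, V a K-vector space, c : V ⊗ V → V ⊗ V and b : V ⊗ V → V K-linear maps satisfying: (i) c ∘ b₁ = b₂ ∘ c₁ ∘ c₂ and c ∘ b₂ = b₁ ∘ c₂ ∘ c₁; (ii) b ∘ c = −b; (iii) b ∘ b₁ ∘ (λ²·id − λ·c₂ + c₂ ∘ c₁) = 0; and (iv) b ∘ b₂ ∘ (λ²·id − λ·c₁ + c₁ ∘ c₂) = 0, where b₁ := b ⊗ id_V, b₂ := id_V ⊗ b, c₁ := c ⊗ id_V, c₂ := id_V ⊗ c on V ⊗ V ⊗ V. Then (λ³ − 1) · (b ∘ b₂) = 0. -/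
import Mathlib


open TensorProduct

noncomputable section

variable {K : Type*} [Field K] {V : Type*} [AddCommGroup V] [Module K V]

/-- The endomorphism `c ⊗ id_V` of `V ⊗ (V ⊗ V)` (transported along associativity). -/
def opC1 (c : V ⊗[K] V →ₗ[K] V ⊗[K] V) :
    V ⊗[K] (V ⊗[K] V) →ₗ[K] V ⊗[K] (V ⊗[K] V) :=
  (TensorProduct.assoc K V V V).toLinearMap ∘ₗ
    LinearMap.rTensor V c ∘ₗ (TensorProduct.assoc K V V V).symm.toLinearMap

/-- The endomorphism `id_V ⊗ c` of `V ⊗ (V ⊗ V)`. -/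
def opC2 (c : V ⊗[K] V →ₗ[K] V ⊗[K] V) :
    V ⊗[K] (V ⊗[K] V) →ₗ[K] V ⊗[K] (V ⊗[K] V) :=
  LinearMap.lTensor V c

/-- The map `b ⊗ id_V : V ⊗ (V ⊗ V) → V ⊗ V`. -/
def opB1 (b : V ⊗[K] V →ₗ[K] V) :
    V ⊗[K] (V ⊗[K] V) →ₗ[K] V ⊗[K] V :=
  LinearMap.rTensor V b ∘ₗ (TensorProduct.assoc K V V V).symm.toLinearMap

/-- The map `id_V ⊗ b : V ⊗ (V ⊗ V) → V ⊗ V`. -/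
def opB2 (b : V ⊗[K] V →ₗ[K] V) :
    V ⊗[K] (V ⊗[K] V) →ₗ[K] V ⊗[K] V :=
  LinearMap.lTensor V b

/-- The braid equation `c₁ ∘ c₂ ∘ c₁ = c₂ ∘ c₁ ∘ c₂`. -/
def BraidEq (c : V ⊗[K] V →ₗ[K] V ⊗[K] V) : Prop :=
  opC1 c ∘ₗ opC2 c ∘ₗ opC1 c = opC2 c ∘ₗ opC1 c ∘ₗ opC2 c

/-- `c` is of Hecke type of mark `lam`: `(c + id) ∘ (c - lam • id) = 0`. -/
def IsHecke (lam : K) (c : V ⊗[K] V →ₗ[K] V ⊗[K] V) : Prop :=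
  (c + LinearMap.id) ∘ₗ (c - lam • LinearMap.id) = 0

/-- `b` is a `c`-bracket: `c ∘ b₁ = b₂ ∘ c₁ ∘ c₂` and `c ∘ b₂ = b₁ ∘ c₂ ∘ c₁`. -/
def IsBracket (c : V ⊗[K] V →ₗ[K] V ⊗[K] V) (b : V ⊗[K] V →ₗ[K] V) : Prop :=
  c ∘ₗ opB1 b = opB2 b ∘ₗ opC1 c ∘ₗ opC2 c ∧
  c ∘ₗ opB2 b = opB1 b ∘ₗ opC2 c ∘ₗ opC1 c

/-- The linear map `V ⊗ V → T(V)`, `v ⊗ w ↦ ι v * ι w`. -/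
def tensMul : V ⊗[K] V →ₗ[K] TensorAlgebra K V :=
  LinearMap.mul' K (TensorAlgebra K V) ∘ₗ
    TensorProduct.map (TensorAlgebra.ι K) (TensorAlgebra.ι K)

/-- The relation on `T(V)` whose associated ring quotient is
`U(V,c,b) = T(V)/(c(z) - lam•z - b(z) : z ∈ V ⊗ V)`. -/
def envRel (lam : K) (c : V ⊗[K] V →ₗ[K] V ⊗[K] V) (b : V ⊗[K] V →ₗ[K] V) :
    TensorAlgebra K V → TensorAlgebra K V → Prop :=
  fun x y => ∃ z : V ⊗[K] V,
    x = tensMul (c z) ∧ y = lam • tensMul z + TensorAlgebra.ι K (b z)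

/-- The canonical map `ι_{c,b} : V → U(V,c,b)`. -/
def envIota (lam : K) (c : V ⊗[K] V →ₗ[K] V ⊗[K] V) (b : V ⊗[K] V →ₗ[K] V) :
    V →ₗ[K] RingQuot (envRel lam c b) :=
  (RingQuot.mkAlgHom K (envRel lam c b)).toLinearMap ∘ₗ TensorAlgebra.ι K

/-- The q-integer `(n)_lam = 1 + lam + ⋯ + lam^(n-1)`. -/
def qInt (lam : K) (n : ℕ) : K := ∑ i ∈ Finset.range n, lam ^ i

/-- The q-factorial `(n)!_lam = (1)_lam (2)_lam ⋯ (n)_lam`. -/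
def qFac (lam : K) (n : ℕ) : K := ∏ i ∈ Finset.range n, qInt lam (i + 1)


lemma opB1_comp_opC1 (c : V ⊗[K] V →ₗ[K] V ⊗[K] V) (b : V ⊗[K] V →ₗ[K] V) :
    opB1 b ∘ₗ opC1 c = opB1 (b ∘ₗ c) := by
  unfold opB1 opC1
  rw [LinearMap.rTensor_comp]
  ext x y z
  simp

lemma opB2_comp_opC2 (c : V ⊗[K] V →ₗ[K] V ⊗[K] V) (b : V ⊗[K] V →ₗ[K] V) :
    opB2 b ∘ₗ opC2 c = opB2 (b ∘ₗ c) := by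
  unfold opB2 opC2
  rw [LinearMap.lTensor_comp]

lemma opB1_neg (b : V ⊗[K] V →ₗ[K] V) : opB1 (K := K) (-b) = - opB1 b := by
  unfold opB1; ext x y z; simp

lemma opB2_neg (b : V ⊗[K] V →ₗ[K] V) : opB2 (K := K) (-b) = - opB2 b := by
  unfold opB2; ext x y z; simp

/-- **Concluding computation.**  If `b` is compatible with `c` (`c∘b₁ = b₂∘c₁∘c₂`,
`c∘b₂ = b₁∘c₂∘c₁`), `b ∘ c = -b`, and the two Jacobi-type identities
`b∘b₁∘(lam²•id - lam•c₂ + c₂∘c₁) = 0` and `b∘b₂∘(lam²•id - lam•c₁ + c₁∘c₂) = 0` hold,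
then `(lam³ - 1) • (b ∘ b₂) = 0`. -/
theorem lambda_cubed_sub_one_smul_bb₂
    (lam : K) (c : V ⊗[K] V →ₗ[K] V ⊗[K] V) (b : V ⊗[K] V →ₗ[K] V)
    (hcb1 : c ∘ₗ opB1 b = opB2 b ∘ₗ opC1 c ∘ₗ opC2 c)
    (hcb2 : c ∘ₗ opB2 b = opB1 b ∘ₗ opC2 c ∘ₗ opC1 c)
    (hanti : b ∘ₗ c = -b)
    (hjac1 : b ∘ₗ opB1 b ∘ₗ (lam ^ 2 • LinearMap.id - lam • opC2 c + opC2 c ∘ₗ opC1 c) = 0)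
    (hjac2 : b ∘ₗ opB2 b ∘ₗ (lam ^ 2 • LinearMap.id - lam • opC1 c + opC1 c ∘ₗ opC2 c) = 0) :
    (lam ^ 3 - 1) • (b ∘ₗ opB2 b) = 0 := by
  have hB1C1 : opB1 b ∘ₗ opC1 c = - opB1 b := by
    rw [opB1_comp_opC1, hanti, opB1_neg]
  have hB2C2 : opB2 b ∘ₗ opC2 c = - opB2 b := by
    rw [opB2_comp_opC2, hanti, opB2_neg]
  have hR1 : b ∘ₗ (opB1 b ∘ₗ (opC2 c ∘ₗ opC1 c)) = - (b ∘ₗ opB2 b) := by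
    rw [← hcb2, ← LinearMap.comp_assoc, hanti, LinearMap.neg_comp]
  have hR2 : b ∘ₗ (opB2 b ∘ₗ (opC1 c ∘ₗ opC2 c)) = - (b ∘ₗ opB1 b) := by
    rw [← hcb1, ← LinearMap.comp_assoc, hanti, LinearMap.neg_comp]
  have e1 : lam ^ 2 • (b ∘ₗ opB1 b) - lam • (b ∘ₗ (opB1 b ∘ₗ opC2 c))
      - (b ∘ₗ opB2 b) = 0 := by
    have h := hjac1
    rw [← LinearMap.comp_assoc] at h
    simp only [LinearMap.comp_add, LinearMap.comp_sub, LinearMap.comp_smul,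
      LinearMap.comp_id, LinearMap.comp_assoc] at h
    rw [hR1] at h
    linear_combination (norm := module) h
  have e2 : lam ^ 2 • (b ∘ₗ opB2 b) - lam • (b ∘ₗ (opB2 b ∘ₗ opC1 c))
      - (b ∘ₗ opB1 b) = 0 := by
    have h := hjac2
    rw [← LinearMap.comp_assoc] at h
    simp only [LinearMap.comp_add, LinearMap.comp_sub, LinearMap.comp_smul,
      LinearMap.comp_id, LinearMap.comp_assoc] at h
    rw [hR2] at h
    linear_combination (norm := module) h
  have e3 : b ∘ₗ (opB1 b ∘ₗ opC2 c) = lam • (b ∘ₗ opB1 b) - lam ^ 2 • (b ∘ₗ opB2 b) := by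
    have h := congrArg (fun f => f ∘ₗ opC2 c) e2
    simp only [LinearMap.sub_comp, LinearMap.smul_comp, LinearMap.zero_comp,
      LinearMap.comp_assoc] at h
    rw [hB2C2, hR2, LinearMap.comp_neg] at h
    linear_combination (norm := module) -h
  rw [e3] at e1
  linear_combination (norm := module) e1

end
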